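/- arXiv:1711.05665 — 4 statements merged into one kernel-verified Lean document; each statement's English description precedes it below -/
import Mathlib

section
/- For any f, g ∈ Homeo_Z^+(R), the translation number of the commutator satisfies -1 ≤ rot([f,g]) ≤ 1, where [f,g] = g^{-1} f^{-1} g f. -/
/-! The commutator is `(f * g)⁻¹ * (g * f)`. Being a homeomorphism, `g * f` moves some point `x`
by exactly its translation number, and every lift moves every point by less than `1` away from
its translation number. Since `τ (f * g)⁻¹ = -τ (f * g) = -τ (g * f)`, the commutator therefore
moves `x` by less than `1`, which confines its translation number to `[-1, 1]`. -/

namespace CircleDeg1Lift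

theorem continuous_units (u : CircleDeg1Liftˣ) : Continuous (u : ℝ → ℝ) :=
  (toOrderIso u).continuous

theorem add_translationNumber_sub_one_lt_map (f : CircleDeg1Lift) (x : ℝ) :
    x + translationNumber f - 1 < f x := by
  linarith [f.translationNumber_le_ceil_sub x, Int.ceil_lt_add_one (f x - x)]

theorem abs_map_sub_sub_translationNumber_lt_one (f : CircleDeg1Lift) (x : ℝ) :
    |f x - x - translationNumber f| < 1 := by
  rw [abs_lt]
  constructor <;>
    linarith [f.map_lt_add_translationNumber_add_one x, f.add_translationNumber_sub_one_lt_map x]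

theorem abs_translationNumber_le_of_abs_map_sub_le (f : CircleDeg1Lift) {x : ℝ} {m : ℕ}
    (h : |f x - x| ≤ m) : |translationNumber f| ≤ m := by
  rw [abs_le] at h ⊢
  constructor
  · simpa using f.le_translationNumber_of_add_int_le (x := x) (m := -m) (by push_cast; linarith)
  · exact f.translationNumber_le_of_le_add_nat (by linarith)

theorem translationNumber_units_mul_comm (u : CircleDeg1Liftˣ) (g : CircleDeg1Lift) :
    translationNumber (u * g) = translationNumber (g * u) := by
  simpa [mul_assoc] using translationNumber_conj_eq u (g * u)

theorem exists_abs_mul_apply_sub_lt_one (g : CircleDeg1Lift) {f : CircleDeg1Lift}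
    (hf : Continuous f) :
    ∃ x, |(g * f) x - x - (translationNumber g + translationNumber f)| < 1 := by
  obtain ⟨x, hx⟩ := f.exists_eq_add_translationNumber hf
  refine ⟨x, ?_⟩
  convert g.abs_map_sub_sub_translationNumber_lt_one (x + translationNumber f) using 2
  rw [mul_apply, hx]
  ring

end CircleDeg1Lift

open CircleDeg1Lift

/-- Milnor–Wood for a commutator: `-1 ≤ rot([f,g]) ≤ 1`. -/
theorem rot_commutator_bounds (f g : CircleDeg1Liftˣ) :
    |CircleDeg1Lift.translationNumber ((g⁻¹ * f⁻¹ * g * f : CircleDeg1Liftˣ) : CircleDeg1Lift)| ≤ 1 := by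
  have hcomm : ((g⁻¹ * f⁻¹ * g * f : CircleDeg1Liftˣ) : CircleDeg1Lift)
      = ↑(f * g)⁻¹ * ↑(g * f) := by
    simp [mul_assoc]
  have hτ : translationNumber ↑(f * g)⁻¹ + translationNumber ↑(g * f) = 0 := by
    rw [translationNumber_units_inv, Units.val_mul, Units.val_mul,
      translationNumber_units_mul_comm, neg_add_cancel]
  obtain ⟨x, hx⟩ := exists_abs_mul_apply_sub_lt_one ↑(f * g)⁻¹ (continuous_units (g * f))
  rw [hτ, sub_zero] at hx
  rw [hcomm]
  exact_mod_cast abs_translationNumber_le_of_abs_map_sub_le _ (m := 1) (by exact_mod_cast hx.le)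
end

section
/- Let f ∈ Homeo^+(S^1) be hyperbolic with fixed points f_+, f_-, and let g ∈ Homeo^+(S^1) be such that g does not exchange the fixed points of f (i.e., not both g(f_+) = f_- and g(f_-) = f_+). Then for all sufficiently large N, either f^N ∘ g has a fixed point or f^{-N} ∘ g has a fixed point. -/
/-!
Say `g f₊ ≠ f₋`; otherwise `g f₋ ≠ f₊` and we argue with `f⁻¹` instead. Removing the repelling
point `f₋` leaves an open interval on which `f` is continuous and injective, hence monotone or
antitone, and along which every orbit tends to `f₊`. Take a closed interval `J` around `f₊` so
small that `g J` misses `f₋`. Then `f^N (g J)` lies between the images under `f^N` of the two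
extreme points of `g J`, and these enter `J` for large `N`. So `f^N ∘ g` maps `J` into itself
and has a fixed point by the intermediate value theorem.
-/

open Filter Topology Set Function

theorem OpenPartialHomeomorph.apply_iterate_conj {X Y : Type*} [TopologicalSpace X]
    [TopologicalSpace Y] (e : OpenPartialHomeomorph X Y) {F : Y → Y}
    (hF : MapsTo F e.target e.target) (n : ℕ) {t : X} (ht : t ∈ e.source) :
    e ((e.symm ∘ F ∘ e)^[n] t) = F^[n] (e t) := by
  induction n with
  | zero => rfl
  | succ n ih =>
    have hmaps : MapsTo (e.symm ∘ F ∘ e) e.source e.source :=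
      e.mapsTo_symm.comp (hF.comp e.mapsTo)
    rw [iterate_succ_apply', iterate_succ_apply', comp_apply, comp_apply,
      e.right_inv (hF (e.map_source (hmaps.iterate n ht))), ih]

section IntervalDynamics

variable {α : Type*} [ConditionallyCompleteLinearOrder α] [DenselyOrdered α]
  [TopologicalSpace α] [OrderTopology α]

theorem ContinuousOn.mapsTo_uIcc_of_injOn_Ioo {a b x y : α} {φ : α → α}
    (hcont : ContinuousOn φ (Ioo a b)) (hinj : InjOn φ (Ioo a b))
    (hx : x ∈ Ioo a b) (hy : y ∈ Ioo a b) : MapsTo φ (uIcc x y) (uIcc (φ x) (φ y)) := by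
  have hsub : uIcc x y ⊆ Ioo a b := ordConnected_Ioo.uIcc_subset hx hy
  rcases hcont.strictMonoOn_of_injOn_Ioo (hx.1.trans hx.2) hinj with hmono | hanti
  · exact (hmono.monotoneOn.mono hsub).mapsTo_uIcc
  · exact (hanti.antitoneOn.mono hsub).mapsTo_uIcc

theorem eventually_exists_isFixedPt_iterate_comp_of_injOn_Ioo {a b c d q : α} {φ γ : α → α}
    (hmaps : MapsTo φ (Ioo a b) (Ioo a b)) (hcont : ContinuousOn φ (Ioo a b))
    (hinj : InjOn φ (Ioo a b))
    (hconv : ∀ t ∈ Ioo a b, Tendsto (fun n ↦ φ^[n] t) atTop (𝓝 q))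
    (hq : Icc c d ∈ 𝓝 q) (hγ : ContinuousOn γ (Icc c d)) (hγmaps : MapsTo γ (Icc c d) (Ioo a b)) :
    ∀ᶠ N in atTop, ∃ t ∈ Icc c d, IsFixedPt (φ^[N] ∘ γ) t := by
  have hcd : c ≤ d := nonempty_Icc.1 ⟨q, mem_of_mem_nhds hq⟩
  obtain ⟨u, hu, hmin⟩ := isCompact_Icc.exists_isMinOn (nonempty_Icc.2 hcd) hγ
  obtain ⟨v, hv, hmax⟩ := isCompact_Icc.exists_isMaxOn (nonempty_Icc.2 hcd) hγ
  filter_upwards [(hconv _ (hγmaps hu)).eventually_mem hq,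
    (hconv _ (hγmaps hv)).eventually_mem hq] with N hNu hNv
  have hsq : MapsTo (φ^[N] ∘ γ) (Icc c d) (Icc c d) := fun t ht ↦
    ordConnected_Icc.uIcc_subset hNu hNv <|
      (hcont.iterate hmaps N).mapsTo_uIcc_of_injOn_Ioo (hinj.iterate hmaps N)
        (hγmaps hu) (hγmaps hv) (Icc_subset_uIcc ⟨hmin ht, hmax ht⟩)
  exact exists_mem_Icc_isFixedPt_of_mapsTo
    ((hcont.iterate hmaps N).comp hγ hγmaps) hcd hsq

theorem OpenPartialHomeomorph.eventually_exists_isFixedPt_iterate_comp {X : Type*}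
    [TopologicalSpace X] (e : OpenPartialHomeomorph α X) {a b : α} (he : e.source = Ioo a b) {F g : X → X} {q : X}
    (hmaps : MapsTo F e.target e.target) (hcont : ContinuousOn F e.target)
    (hinj : InjOn F e.target)
    (hconv : ∀ x ∈ e.target, Tendsto (fun n ↦ F^[n] x) atTop (𝓝 q))
    (hq : q ∈ e.target) (hg : Continuous g) (hgq : g q ∈ e.target) :
    ∀ᶠ N in atTop, ∃ x, IsFixedPt (F^[N] ∘ g) x := by
  set φ := e.symm ∘ F ∘ e
  set γ := e.symm ∘ g ∘ e
  have hφmaps : MapsTo φ e.source e.source := e.mapsTo_symm.comp (hmaps.comp e.mapsTo)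
  have hφconv : ∀ t ∈ e.source, Tendsto (fun n ↦ φ^[n] t) atTop (𝓝 (e.symm q)) := by
    intro t ht
    refine ((e.continuousAt_symm hq).tendsto.comp (hconv _ (e.map_source ht))).congr fun n ↦ ?_
    rw [comp_apply, ← e.apply_iterate_conj hmaps n ht, e.left_inv (hφmaps.iterate n ht)]
  set U := e.source ∩ e ⁻¹' (g ⁻¹' e.target)
  have hU : U ∈ 𝓝 (e.symm q) :=
    (e.isOpen_inter_preimage (e.open_target.preimage hg)).mem_nhds
      ⟨e.map_target hq, by simpa [U, e.right_inv hq] using hgq⟩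
  obtain ⟨c, d, -, hcd, hcdU⟩ := exists_Icc_mem_subset_of_mem_nhds hU
  have hγmaps : MapsTo γ (Icc c d) e.source := fun t ht ↦ e.map_target (hcdU ht).2
  have hγ : ContinuousOn γ (Icc c d) :=
    (e.continuousOn_symm.comp ((hg.comp_continuousOn e.continuousOn).mono inter_subset_left)
      fun _ ht ↦ ht.2).mono hcdU
  have hφcont : ContinuousOn φ e.source :=
    e.continuousOn_symm.comp (hcont.comp e.continuousOn e.mapsTo) (hmaps.comp e.mapsTo)
  have hφinj : InjOn φ e.source :=
    e.symm.injOn.comp (hinj.comp e.injOn e.mapsTo) (hmaps.comp e.mapsTo)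
  rw [he] at hφmaps hφcont hφinj hφconv hγmaps
  filter_upwards [eventually_exists_isFixedPt_iterate_comp_of_injOn_Ioo hφmaps hφcont hφinj
    hφconv hcd hγ hγmaps] with N ⟨t, ht, hfix⟩
  refine ⟨e t, ?_⟩
  have hgt : g (e t) = e (γ t) := (e.right_inv (hcdU ht).2).symm
  rw [IsFixedPt, comp_apply, hgt, ← e.apply_iterate_conj hmaps N (he ▸ hγmaps ht)]
  exact congrArg e hfix

end IntervalDynamics

theorem AddCircle.eventually_exists_isFixedPt_iterate_comp {T : ℝ} [Fact (0 < T)]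
    (F g : AddCircle T ≃ₜ AddCircle T) {q r : AddCircle T} (hFr : F r = r)
    (hconv : ∀ x ≠ r, Tendsto (fun n ↦ (⇑F)^[n] x) atTop (𝓝 q)) (hqr : q ≠ r) (hgq : g q ≠ r) :
    ∀ᶠ N in atTop, ∃ x, IsFixedPt ((⇑F)^[N] ∘ g) x := by
  obtain ⟨ρ, rfl⟩ := QuotientAddGroup.mk_surjective r
  exact (openPartialHomeomorphCoe T ρ).eventually_exists_isFixedPt_iterate_comp rfl
    (fun x hx h ↦ hx (F.injective (h.trans hFr.symm))) F.continuous.continuousOn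
    F.injective.injOn hconv hqr g.continuous hgq

/-- if `f` is hyperbolic with fixed points `p` (attracting) and `m` (repelling),
and `g` does not exchange the fixed points of `f`, then for all sufficiently large `N`,
either `f^N ∘ g` or `f^{-N} ∘ g` has a fixed point. -/
theorem hyperbolic_power_comp_has_fixed_point
    (f g : AddCircle (1 : ℝ) ≃ₜ AddCircle (1 : ℝ))
    (p m : AddCircle (1 : ℝ)) (hpm : p ≠ m)
    (hattr : ∀ x, x ≠ m → Tendsto (fun n : ℕ => (⇑f)^[n] x) atTop (𝓝 p))
    (hrep : ∀ x, x ≠ p → Tendsto (fun n : ℕ => (⇑f.symm)^[n] x) atTop (𝓝 m))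
    (hg : ¬(g p = m ∧ g m = p)) :
    ∃ N₀ : ℕ, ∀ N ≥ N₀,
      (∃ x, (⇑f)^[N] (g x) = x) ∨ (∃ x, (⇑f.symm)^[N] (g x) = x) := by
  have hfp : f p = p := isFixedPt_of_tendsto_iterate (hattr p hpm) f.continuous.continuousAt
  have hfm : f.symm m = m :=
    isFixedPt_of_tendsto_iterate (hrep m hpm.symm) f.symm.continuous.continuousAt
  rcases not_and_or.mp hg with hgp | hgm
  · obtain ⟨N₀, h⟩ := eventually_atTop.mp <| AddCircle.eventually_exists_isFixedPt_iterate_comp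
      f g (f.symm_apply_eq.mp hfm).symm hattr hpm hgp
    exact ⟨N₀, fun N hN ↦ Or.inl (h N hN)⟩
  · obtain ⟨N₀, h⟩ := eventually_atTop.mp <| AddCircle.eventually_exists_isFixedPt_iterate_comp
      f.symm g (f.symm_apply_eq.mpr hfp.symm) hrep hpm.symm hgm
    exact ⟨N₀, fun N hN ↦ Or.inr (h N hN)⟩
end

section
/- Let f ∈ Homeo^+(S^1) be hyperbolic, let g ∈ Homeo^+(S^1) satisfy g^{-1}(f_-) ≠ f_+, and suppose that for all large N the map f^N ∘ g is hyperbolic with attracting point p_N and repelling point q_N. Then p_N → f_+ and q_N → g^{-1}(f_-) as N → ∞. -/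
open Filter Topology Set Function

/-!
Off its repelling point `m` the circle is a line, on which every iterate of `f` is monotone or
antitone; so `fⁿ` maps `[a, b]` between `fⁿ a` and `fⁿ b`, and `fⁿ → p` uniformly on compact sets
avoiding `m`. Take a small neighbourhood `V` of `p` and a neighbourhood `W` of `m` disjoint from
`g(V)`. For large `N`, `f^N ∘ g` maps the compact set `g⁻¹(Wᶜ) ⊇ V` into `V`, so its attractor
`p_N` lies in `closure V`. For the repellers, `g⁻¹ ∘ f⁻ᴺ` is conjugate by `g` to `f⁻ᴺ ∘ g⁻¹`,
whose attractors `g(q_N)` therefore tend to the attractor `m` of `f⁻¹`.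
-/

variable {X : Type*} [TopologicalSpace X]

def AttractsCompactSubsets (f : X → X) (s : Set X) (p : X) : Prop :=
  ∀ K, IsCompact K → K ⊆ s → ∀ U ∈ 𝓝 p, ∀ᶠ n in atTop, MapsTo f^[n] K U

theorem attractsCompactSubsets_univ_of_tendsto {α : Type*} [ConditionallyCompleteLinearOrder α]
    [DenselyOrdered α] [TopologicalSpace α] [OrderTopology α] {H : α → α} (hc : Continuous H)
    (hi : Injective H) {c : α} (hH : ∀ x, Tendsto (fun n => H^[n] x) atTop (𝓝 c)) :
    AttractsCompactSubsets H univ c := by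
  intro K hK _ U hU
  obtain ⟨a, ha⟩ := hK.bddBelow
  obtain ⟨b, hb⟩ := hK.bddAbove
  have hK_sub : K ⊆ uIcc a b := fun x hx => Icc_subset_uIcc ⟨ha hx, hb hx⟩
  have hmaps (n : ℕ) : MapsTo H^[n] (uIcc a b) (uIcc (H^[n] a) (H^[n] b)) := by
    rcases (hc.iterate n).strictMono_of_inj (hi.iterate n) with hmono | hanti
    · exact hmono.monotone.mapsTo_uIcc
    · exact hanti.antitone.mapsTo_uIcc
  filter_upwards [((hH a).uIcc (hH b)).eventually (eventually_smallSets_subset.2 hU)] with n hn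
  exact ((hmaps n).mono_left hK_sub).mono_right hn

theorem Function.Semiconj.attractsCompactSubsets_range {Z : Type*} [TopologicalSpace Z]
    {e : Z → X} {H : Z → Z} {f : X → X} (he : IsInducing e) (hconj : Semiconj e H f) {c : Z}
    (hH : AttractsCompactSubsets H univ c) : AttractsCompactSubsets f (range e) (e c) := by
  intro K hK hKe U hU
  filter_upwards [hH _ ((he.isCompact_preimage_iff hKe).2 hK) (subset_univ _) _
    (he.continuous.continuousAt.preimage_mem_nhds hU)] with n hn
  rintro _ hx
  obtain ⟨z, rfl⟩ := hKe hx
  rw [← hconj.iterate_right n z]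
  exact hn hx

theorem attractsCompactSubsets_compl_singleton {α : Type*} [ConditionallyCompleteLinearOrder α]
    [DenselyOrdered α] [TopologicalSpace α] [OrderTopology α] {m p : X}
    (Φ : α ≃ₜ ({m}ᶜ : Set X)) (f : X ≃ₜ X) (hfm : f m = m) (hpm : p ≠ m)
    (hattr : ∀ x, x ≠ m → Tendsto (fun n => f^[n] x) atTop (𝓝 p)) :
    AttractsCompactSubsets f {m}ᶜ p := by
  let f' : ({m}ᶜ : Set X) ≃ₜ ({m}ᶜ : Set X) :=
    f.sets (by ext x; rw [mem_preimage, mem_compl_singleton_iff, mem_compl_singleton_iff,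
      ← f.injective.ne_iff, hfm])
  let H : α ≃ₜ α := Φ.trans (f'.trans Φ.symm)
  have he : IsEmbedding (Subtype.val ∘ Φ) := IsEmbedding.subtypeVal.comp Φ.isEmbedding
  have hconj : Semiconj (Subtype.val ∘ Φ) H f := fun x => by simp [H, f']
  let c := Φ.symm ⟨p, hpm⟩
  have hc : (Subtype.val ∘ Φ) c = p := by simp [c]
  have hrange : range (Subtype.val ∘ Φ) = {m}ᶜ := by
    rw [range_comp, Φ.range_coe, image_univ, Subtype.range_coe]
  have hH : ∀ x, Tendsto (fun n => H^[n] x) atTop (𝓝 c) := fun x => by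
    rw [he.tendsto_nhds_iff, hc]
    exact (hattr _ (Φ x).2).congr fun n => (hconj.iterate_right n x).symm
  simpa only [hrange, hc] using
    hconj.attractsCompactSubsets_range he.isInducing
      (attractsCompactSubsets_univ_of_tendsto H.continuous H.injective hH)

theorem AddCircle.nonempty_homeomorph_compl_singleton (m : AddCircle (1 : ℝ)) :
    Nonempty (ℝ ≃ₜ ({m}ᶜ : Set (AddCircle (1 : ℝ)))) := by
  obtain ⟨μ, rfl⟩ := QuotientAddGroup.mk_surjective m
  let P := AddCircle.openPartialHomeomorphCoe (1 : ℝ) μ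
  let A : ℝ ≃ₜ ℝ := (Homeomorph.addRight 1).trans
    ((Homeomorph.mulRight₀ (1 / 2 : ℝ) (by norm_num)).trans (Homeomorph.addLeft μ))
  have hA : Ioo (-1 : ℝ) 1 = A ⁻¹' P.source := by
    ext x
    simp only [mem_Ioo, mem_preimage, P, AddCircle.openPartialHomeomorphCoe_source, A,
      Homeomorph.trans_apply, Homeomorph.coe_addRight, Homeomorph.coe_mulRight₀,
      Homeomorph.coe_addLeft]
    constructor <;> rintro ⟨h₁, h₂⟩ <;> constructor <;> linarith
  exact ⟨(orderIsoIooNegOneOne ℝ).toHomeomorph.trans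
    ((A.sets hA).trans P.toHomeomorphSourceTarget)⟩

theorem Set.MapsTo.mem_closure_of_tendsto_iterate {F : X → X} {K V : Set X} (hF : MapsTo F K V)
    (hVK : V ⊆ K) {x q : X} (hx : x ∈ K) (hq : Tendsto (fun n => F^[n] x) atTop (𝓝 q)) :
    q ∈ closure V := by
  refine mem_closure_of_tendsto ((tendsto_add_atTop_iff_nat 1).2 hq)
    (Eventually.of_forall fun n => ?_)
  rw [iterate_succ_apply']
  exact hF ((hF.mono_right hVK).iterate n hx)

section Attractors

variable [CompactSpace X] [T2Space X] {f : X → X} {m p : X} [(𝓝[≠] p).NeBot]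
  {pN qN : ℕ → X}

theorem AttractsCompactSubsets.tendsto_attractor_iterate_comp
    (hf : AttractsCompactSubsets f {m}ᶜ p) {g : X → X} (hg : Continuous g) (hgp : g p ≠ m)
    (hpN : ∀ᶠ N in atTop, ∀ x, x ≠ qN N →
      Tendsto (fun n => (fun y => f^[N] (g y))^[n] x) atTop (𝓝 (pN N))) :
    Tendsto pN atTop (𝓝 p) := by
  refine (closed_nhds_basis p).tendsto_right_iff.2 fun C ⟨hC, hCc⟩ => ?_
  obtain ⟨W₀, W, hW₀, hW, hgpW₀, hmW, hdisj⟩ := t2_separation hgp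
  set V := interior C ∩ g ⁻¹' W₀
  have hV : V ∈ 𝓝 p := inter_mem (interior_mem_nhds.2 hC)
    (hg.continuousAt.preimage_mem_nhds (hW₀.mem_nhds hgpW₀))
  have hVK : V ⊆ g ⁻¹' Wᶜ := fun x hx => hdisj.subset_compl_right hx.2
  have hWm : Wᶜ ⊆ {m}ᶜ := compl_subset_compl.2 (singleton_subset_iff.2 hmW)
  filter_upwards [hf _ hW.isClosed_compl.isCompact hWm V hV, hpN] with N hN hpN
  obtain ⟨x, hxV, hxq⟩ := ((infinite_of_mem_nhds p hV).sdiff (finite_singleton (qN N))).nonempty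
  exact closure_minimal (inter_subset_left.trans interior_subset) hCc
    ((hN.comp (mapsTo_preimage g Wᶜ)).mem_closure_of_tendsto_iterate hVK (hVK hxV) (hpN x hxq))

theorem AttractsCompactSubsets.tendsto_attractor_comp_iterate
    (hf : AttractsCompactSubsets f {m}ᶜ p) (h : X ≃ₜ X) (hhp : h p ≠ m)
    (hpN : ∀ᶠ N in atTop, ∀ x, x ≠ qN N →
      Tendsto (fun n => (fun y => h (f^[N] y))^[n] x) atTop (𝓝 (pN N))) :
    Tendsto pN atTop (𝓝 (h p)) := by
  have hconj (N : ℕ) : Semiconj h.symm (fun y => h (f^[N] y)) (fun y => f^[N] (h y)) :=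
    fun y => by simp
  have hpN' : Tendsto (h.symm ∘ pN) atTop (𝓝 p) :=
    hf.tendsto_attractor_iterate_comp (qN := h.symm ∘ qN) h.continuous hhp
      (hpN.mono fun N hN x hx =>
        ((h.symm.continuous.tendsto _).comp (hN (h x) fun e => hx (h.eq_symm_apply.2 e))).congr
          fun n => ((hconj N).iterate_right n (h x)).trans (by rw [h.symm_apply_apply]))
  simpa [comp_def] using (h.continuous.tendsto _).comp hpN'

end Attractors

/-- if `f` is hyperbolic (attracting `p`, repelling `m`), `g⁻¹(m) ≠ p`, and for
all large `N` the composition `f^N ∘ g` is hyperbolic with attracting point `pN N` and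
repelling point `qN N`, then `pN N → p` and `qN N → g⁻¹(m)` as `N → ∞`. -/
theorem hyperbolic_power_comp_fixed_points_limit
    (f g : AddCircle (1 : ℝ) ≃ₜ AddCircle (1 : ℝ))
    (p m : AddCircle (1 : ℝ)) (hpm : p ≠ m)
    (hattr : ∀ x, x ≠ m → Tendsto (fun n : ℕ => (⇑f)^[n] x) atTop (𝓝 p))
    (hrep : ∀ x, x ≠ p → Tendsto (fun n : ℕ => (⇑f.symm)^[n] x) atTop (𝓝 m))
    (hgm : g.symm m ≠ p) (pN qN : ℕ → AddCircle (1 : ℝ)) (N₀ : ℕ)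
    (hhyp : ∀ N ≥ N₀, pN N ≠ qN N ∧
      (∀ x, x ≠ qN N →
        Tendsto (fun n : ℕ => (fun y => (⇑f)^[N] (g y))^[n] x) atTop (𝓝 (pN N))) ∧
      (∀ x, x ≠ pN N →
        Tendsto (fun n : ℕ => (fun y => g.symm ((⇑f.symm)^[N] y))^[n] x) atTop (𝓝 (qN N)))) :
    Tendsto pN atTop (𝓝 p) ∧ Tendsto qN atTop (𝓝 (g.symm m)) := by
  have := nontrivial_of_ne p m hpm
  have hfm : f m = m := (f.symm_apply_eq.1
    (isFixedPt_of_tendsto_iterate (hrep m hpm.symm) f.symm.continuous.continuousAt)).symm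
  have hfp : f.symm p = p := f.symm_apply_eq.2
    (isFixedPt_of_tendsto_iterate (hattr p hpm) f.continuous.continuousAt).symm
  obtain ⟨Φm⟩ := AddCircle.nonempty_homeomorph_compl_singleton m
  obtain ⟨Φp⟩ := AddCircle.nonempty_homeomorph_compl_singleton p
  have hf_attr := attractsCompactSubsets_compl_singleton Φm f hfm hpm hattr
  have hf_rep := attractsCompactSubsets_compl_singleton Φp f.symm hfp hpm.symm hrep
  have hhyp_ev := eventually_atTop.2 ⟨N₀, hhyp⟩
  exact ⟨hf_attr.tendsto_attractor_iterate_comp g.continuous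
      (fun h => hgm (g.symm_apply_eq.2 h.symm)) (hhyp_ev.mono fun _ h => h.2.1),
    hf_rep.tendsto_attractor_comp_iterate g.symm hgm (hhyp_ev.mono fun _ h => h.2.2)⟩
end

section
/- Let I ⊂ R be an open interval and let (g_t)_{t ∈ [0,1]} be a continuous family of orientation-preserving homeomorphisms of I with no fixed points in I (so each g_t satisfies g_t(x) > x for all x ∈ I, or g_t(x) < x for all x ∈ I, consistently in t). Then there exists a continuous family (f_t)_{t ∈ [0,1]} of homeomorphisms of I with f_0 = id and f_t ∘ g_t ∘ f_t^{-1} = g_0 for all t. -/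
open Set Filter Topology

section gp

open scoped Classical in
noncomputable def EP (g : ℝ → ℝ → ℝ) (I : Set ℝ) (t : ℝ) : Equiv.Perm ↥I :=
  if h : Set.BijOn (g t) I I then Set.BijOn.equiv (g t) h else 1

lemma EP_apply {g : ℝ → ℝ → ℝ} {I : Set ℝ} {t : ℝ} (hb : Set.BijOn (g t) I I) (p : ↥I) :
    (EP g I t p : ℝ) = g t p := by
  simp only [EP, dif_pos hb, Set.BijOn.equiv, Equiv.ofBijective_apply,
    Set.MapsTo.val_restrict_apply]

open scoped Classical in
noncomputable def gp (g : ℝ → ℝ → ℝ) (I : Set ℝ) (t : ℝ) (n : ℤ) (x : ℝ) : ℝ :=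
  if h : x ∈ I then ((EP g I t ^ n) ⟨x, h⟩ : ℝ) else x

lemma gp_mem {g : ℝ → ℝ → ℝ} {I : Set ℝ} {t : ℝ} {n : ℤ} {x : ℝ} (hx : x ∈ I) :
    gp g I t n x ∈ I := by
  simp only [gp, dif_pos hx]; exact Subtype.coe_prop _

lemma gp_zero {g : ℝ → ℝ → ℝ} {I : Set ℝ} {t : ℝ} {x : ℝ} : gp g I t 0 x = x := by
  by_cases hx : x ∈ I <;> simp [gp, hx]

lemma gp_coe {g : ℝ → ℝ → ℝ} {I : Set ℝ} {t : ℝ} (k : ℤ) (p : ↥I) :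
    gp g I t k ↑p = ↑((EP g I t ^ k) p) := by
  simp only [gp, dif_pos p.2, Subtype.coe_eta]

lemma gp_add {g : ℝ → ℝ → ℝ} {I : Set ℝ} {t : ℝ} (m n : ℤ) {x : ℝ} (hx : x ∈ I) :
    gp g I t (m + n) x = gp g I t m (gp g I t n x) := by
  show gp g I t (m + n) ((⟨x, hx⟩ : ↥I) : ℝ) = gp g I t m (gp g I t n ((⟨x, hx⟩ : ↥I) : ℝ))
  rw [gp_coe, gp_coe, gp_coe, zpow_add, Equiv.Perm.mul_apply]

lemma gp_coe' {g : ℝ → ℝ → ℝ} {I : Set ℝ} {t : ℝ} (k : ℤ) (p : ↥I) :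
    gp g I t k ↑p = ↑((EP g I t ^ k) p) := gp_coe k p

lemma gp_one {g : ℝ → ℝ → ℝ} {I : Set ℝ} {t : ℝ} (hb : Set.BijOn (g t) I I) {x : ℝ}
    (hx : x ∈ I) : gp g I t 1 x = g t x := by
  show gp g I t 1 ((⟨x, hx⟩ : ↥I) : ℝ) = _
  rw [gp_coe, zpow_one, EP_apply hb]

lemma gp_cancel {g : ℝ → ℝ → ℝ} {I : Set ℝ} {t : ℝ} (n : ℤ) {x : ℝ} (hx : x ∈ I) :
    gp g I t (-n) (gp g I t n x) = x := by
  rw [← gp_add _ _ hx, neg_add_cancel, gp_zero]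

lemma strictMono_perm_zpow {α : Type*} [LinearOrder α] {σ : Equiv.Perm α}
    (h : StrictMono ⇑σ) (n : ℤ) : StrictMono ⇑(σ ^ n) := by
  have hpow : ∀ (τ : Equiv.Perm α), StrictMono ⇑τ → ∀ m : ℕ, StrictMono ⇑(τ ^ m) := by
    intro τ hτ m
    induction m with
    | zero => simpa using strictMono_id
    | succ k ih =>
      have : (τ ^ (k + 1) : Equiv.Perm α) = τ ^ k * τ := pow_succ τ k
      rw [this]
      exact fun a b hab => ih (hτ hab)
  have hinv : StrictMono ⇑σ⁻¹ := by
    intro a b hab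
    have := (h.lt_iff_lt (a := σ⁻¹ a) (b := σ⁻¹ b))
    simp only [Equiv.Perm.inv_def, Equiv.apply_symm_apply] at this
    exact this.mp hab
  obtain ⟨m, rfl | rfl⟩ := Int.eq_nat_or_neg n
  · rw [zpow_natCast]; exact hpow σ h m
  · rw [zpow_neg, zpow_natCast, ← inv_pow]; exact hpow σ⁻¹ hinv m

lemma gp_strictMonoOn {g : ℝ → ℝ → ℝ} {I : Set ℝ} {t : ℝ} (hb : Set.BijOn (g t) I I)
    (hm : StrictMonoOn (g t) I) (n : ℤ) : StrictMonoOn (gp g I t n) I := by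
  have hE : StrictMono ⇑(EP g I t) := by
    intro p q hpq
    have : (EP g I t p : ℝ) < (EP g I t q : ℝ) := by
      rw [EP_apply hb, EP_apply hb]
      exact hm p.2 q.2 (Subtype.coe_lt_coe.mpr hpq)
    exact Subtype.coe_lt_coe.mp this
  intro x hx y hy hxy
  simp only [gp, dif_pos hx, dif_pos hy]
  exact Subtype.coe_lt_coe.mpr (strictMono_perm_zpow hE n (Subtype.mk_lt_mk.mpr hxy))

lemma gcont_slice {g : ℝ → ℝ → ℝ} {I : Set ℝ}
    (hgcont : ContinuousOn (fun q : ℝ × ℝ => g q.1 q.2) (Icc 0 1 ×ˢ I)) {t : ℝ}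
    (ht : t ∈ Icc (0:ℝ) 1) : ContinuousOn (g t) I := by
  have h1 : ContinuousOn (fun x : ℝ => ((t, x) : ℝ × ℝ)) I :=
    (continuous_const.prodMk continuous_id).continuousOn
  exact hgcont.comp h1 (fun y hy => ⟨ht, hy⟩)

lemma gcont_c {g : ℝ → ℝ → ℝ} {I : Set ℝ}
    (hgcont : ContinuousOn (fun q : ℝ × ℝ => g q.1 q.2) (Icc 0 1 ×ˢ I)) {c : ℝ}
    (hc : c ∈ I) : ContinuousOn (fun q : ℝ × ℝ => g q.1 c) (Icc 0 1 ×ˢ I) := by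
  have h1 : ContinuousOn (fun q : ℝ × ℝ => ((q.1, c) : ℝ × ℝ)) (Icc 0 1 ×ˢ I) :=
    (continuous_fst.prodMk continuous_const).continuousOn
  exact hgcont.comp h1 (fun q hq => ⟨hq.1, hc⟩)

lemma gp_inv_eq {g : ℝ → ℝ → ℝ} {I : Set ℝ} {t : ℝ} (hb : Set.BijOn (g t) I I) {y : ℝ}
    (hy : y ∈ I) : g t (gp g I t (-1) y) = y := by
  have h1 : gp g I t (1 + -1) y = gp g I t 1 (gp g I t (-1) y) := gp_add 1 (-1) hy
  simpa [gp_zero, gp_one hb (gp_mem hy)] using h1.symm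

lemma ginv_contOn {I : Set ℝ} (hIopen : IsOpen I) {g : ℝ → ℝ → ℝ}
    (hgcont : ContinuousOn (fun q : ℝ × ℝ => g q.1 q.2) (Icc 0 1 ×ˢ I))
    (hghomeo : ∀ t ∈ Icc (0 : ℝ) 1, Set.BijOn (g t) I I ∧ StrictMonoOn (g t) I) :
    ContinuousOn (fun q : ℝ × ℝ => gp g I q.1 (-1) q.2) (Icc 0 1 ×ˢ I) := by
  rintro ⟨t₀, y₀⟩ hq₀
  obtain ⟨ht₀, hy₀⟩ := hq₀
  set z₀ := gp g I t₀ (-1) y₀ with hz₀def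
  have hz₀ : z₀ ∈ I := gp_mem hy₀
  have hgz : g t₀ z₀ = y₀ := gp_inv_eq (hghomeo t₀ ht₀).1 hy₀
  obtain ⟨δ, hδpos, hδ⟩ : ∃ δ > 0, Metric.ball z₀ δ ⊆ I :=
    Metric.isOpen_iff.mp hIopen z₀ hz₀
  rw [Real.ball_eq_Ioo] at hδ
  unfold ContinuousWithinAt
  apply tendsto_order.2
  constructor
  · intro b hb
    set c := max b (z₀ - δ/2) with hcdef
    have hcI : c ∈ I := hδ ⟨lt_max_iff.mpr (Or.inr (by linarith)),
      max_lt (by linarith) (by linarith)⟩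
    have hclt : c < z₀ := max_lt hb (by linarith)
    have h1 : g t₀ c < y₀ := by
      rw [← hgz]; exact (hghomeo t₀ ht₀).2 hcI hz₀ hclt
    have hcont : ContinuousWithinAt (fun q : ℝ × ℝ => q.2 - g q.1 c) (Icc 0 1 ×ˢ I) (t₀, y₀) :=
      (continuous_snd.continuousWithinAt).sub ((gcont_c hgcont hcI) (t₀, y₀) ⟨ht₀, hy₀⟩)
    have hev : ∀ᶠ q in 𝓝[Icc 0 1 ×ˢ I] (t₀, y₀), 0 < q.2 - g q.1 c :=
      hcont (Ioi_mem_nhds (by simp; linarith))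
    filter_upwards [hev, self_mem_nhdsWithin] with q h1q h2q
    obtain ⟨hqt, hqx⟩ : q.1 ∈ Icc (0:ℝ) 1 ∧ q.2 ∈ I := h2q
    have hz : gp g I q.1 (-1) q.2 ∈ I := gp_mem hqx
    have h3 : g q.1 c < g q.1 (gp g I q.1 (-1) q.2) := by
      rw [gp_inv_eq (hghomeo q.1 hqt).1 hqx]; linarith
    have h4 := ((hghomeo q.1 hqt).2.lt_iff_lt hcI hz).mp h3
    calc b ≤ c := le_max_left _ _
      _ < _ := h4
  · intro b hb
    set c := min b (z₀ + δ/2) with hcdef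
    have hcI : c ∈ I := hδ ⟨lt_min (by linarith) (by linarith),
      lt_of_le_of_lt (min_le_right _ _) (by linarith)⟩
    have hclt : z₀ < c := lt_min hb (by linarith)
    have h1 : y₀ < g t₀ c := by
      rw [← hgz]; exact (hghomeo t₀ ht₀).2 hz₀ hcI hclt
    have hcont : ContinuousWithinAt (fun q : ℝ × ℝ => g q.1 c - q.2) (Icc 0 1 ×ˢ I) (t₀, y₀) :=
      ((gcont_c hgcont hcI) (t₀, y₀) ⟨ht₀, hy₀⟩).sub (continuous_snd.continuousWithinAt)
    have hev : ∀ᶠ q in 𝓝[Icc 0 1 ×ˢ I] (t₀, y₀), 0 < g q.1 c - q.2 :=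
      hcont (Ioi_mem_nhds (by simp; linarith))
    filter_upwards [hev, self_mem_nhdsWithin] with q h1q h2q
    obtain ⟨hqt, hqx⟩ : q.1 ∈ Icc (0:ℝ) 1 ∧ q.2 ∈ I := h2q
    have hz : gp g I q.1 (-1) q.2 ∈ I := gp_mem hqx
    have h3 : g q.1 (gp g I q.1 (-1) q.2) < g q.1 c := by
      rw [gp_inv_eq (hghomeo q.1 hqt).1 hqx]; linarith
    have h4 := ((hghomeo q.1 hqt).2.lt_iff_lt hz hcI).mp h3
    calc gp g I q.1 (-1) q.2 < c := h4
      _ ≤ b := min_le_left _ _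

lemma gp_contOn {I : Set ℝ} (hIopen : IsOpen I) {g : ℝ → ℝ → ℝ}
    (hgcont : ContinuousOn (fun q : ℝ × ℝ => g q.1 q.2) (Icc 0 1 ×ˢ I))
    (hghomeo : ∀ t ∈ Icc (0 : ℝ) 1, Set.BijOn (g t) I I ∧ StrictMonoOn (g t) I) (n : ℤ) :
    ContinuousOn (fun q : ℝ × ℝ => gp g I q.1 n q.2) (Icc 0 1 ×ˢ I) := by
  induction n using Int.induction_on with
  | zero => exact continuous_snd.continuousOn.congr (fun q hq => gp_zero)
  | succ i ih =>
    have hcomp : ContinuousOn (fun q : ℝ × ℝ => ((q.1, gp g I q.1 (i : ℤ) q.2) : ℝ × ℝ))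
        (Icc 0 1 ×ˢ I) := (continuous_fst.continuousOn).prodMk ih
    have hmaps : Set.MapsTo (fun q : ℝ × ℝ => ((q.1, gp g I q.1 (i : ℤ) q.2) : ℝ × ℝ))
        (Icc 0 1 ×ˢ I) (Icc 0 1 ×ˢ I) := fun q hq => ⟨hq.1, gp_mem hq.2⟩
    refine (hgcont.comp hcomp hmaps).congr (fun q hq => ?_)
    have : gp g I q.1 (1 + (i : ℤ)) q.2 = gp g I q.1 1 (gp g I q.1 (i : ℤ) q.2) :=
      gp_add 1 _ hq.2
    rw [show ((i : ℤ) + 1) = 1 + (i : ℤ) by ring, this,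
      gp_one (hghomeo q.1 hq.1).1 (gp_mem hq.2)]
    rfl
  | pred i ih =>
    have hcomp : ContinuousOn (fun q : ℝ × ℝ => ((q.1, gp g I q.1 (-(i : ℤ)) q.2) : ℝ × ℝ))
        (Icc 0 1 ×ˢ I) := (continuous_fst.continuousOn).prodMk ih
    have hmaps : Set.MapsTo (fun q : ℝ × ℝ => ((q.1, gp g I q.1 (-(i : ℤ)) q.2) : ℝ × ℝ))
        (Icc 0 1 ×ˢ I) (Icc 0 1 ×ˢ I) := fun q hq => ⟨hq.1, gp_mem hq.2⟩
    refine ((ginv_contOn hIopen hgcont hghomeo).comp hcomp hmaps).congr (fun q hq => ?_)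
    have : gp g I q.1 (-1 + -(i : ℤ)) q.2 = gp g I q.1 (-1) (gp g I q.1 (-(i : ℤ)) q.2) :=
      gp_add (-1) _ hq.2
    rw [show (-(i : ℤ) - 1) = -1 + -(i : ℤ) by ring, this]
    rfl

lemma gp_contOn_slice {I : Set ℝ} (hIopen : IsOpen I) {g : ℝ → ℝ → ℝ}
    (hgcont : ContinuousOn (fun q : ℝ × ℝ => g q.1 q.2) (Icc 0 1 ×ˢ I))
    (hghomeo : ∀ t ∈ Icc (0 : ℝ) 1, Set.BijOn (g t) I I ∧ StrictMonoOn (g t) I)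
    {t : ℝ} (ht : t ∈ Icc (0:ℝ) 1) (n : ℤ) : ContinuousOn (gp g I t n) I := by
  have h1 : ContinuousOn (fun x : ℝ => ((t, x) : ℝ × ℝ)) I :=
    (continuous_const.prodMk continuous_id).continuousOn
  exact (gp_contOn hIopen hgcont hghomeo n).comp h1 (fun y hy => ⟨ht, hy⟩)

lemma gp_orbit_strictMono {I : Set ℝ} {g : ℝ → ℝ → ℝ} {t : ℝ}
    (hb : Set.BijOn (g t) I I) (hm : StrictMonoOn (g t) I)
    (hpos : ∀ x ∈ I, x < g t x) {x₀ : ℝ} (hx₀ : x₀ ∈ I) :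
    StrictMono (fun n : ℤ => gp g I t n x₀) := by
  apply strictMono_int_of_lt_succ
  intro n
  have h1 : gp g I t (n + 1) x₀ = gp g I t n (g t x₀) := by
    rw [gp_add n 1 hx₀, gp_one hb hx₀]
  rw [h1]
  exact gp_strictMonoOn hb hm n hx₀ (hb.mapsTo hx₀) (hpos x₀ hx₀)

lemma escape {I : Set ℝ} (hIconn : I.OrdConnected) {g : ℝ → ℝ → ℝ} {t : ℝ}
    (hgc : ContinuousOn (g t) I) (hb : Set.BijOn (g t) I I)
    (hpos : ∀ x ∈ I, x < g t x) {x₀ : ℝ} (hx₀ : x₀ ∈ I) {x : ℝ} (hx : x ∈ I) :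
    (∃ n : ℤ, x < gp g I t n x₀) ∧ (∃ n : ℤ, gp g I t n x₀ ≤ x) := by
  constructor
  · by_contra hcon
    push_neg at hcon
    set a : ℕ → ℝ := fun k => gp g I t (k : ℤ) x₀ with hadef
    have haI : ∀ k, a k ∈ I := fun k => gp_mem hx₀
    have hstep : ∀ k : ℕ, g t (a k) = a (k + 1) := by
      intro k
      have : gp g I t ((k : ℤ) + 1) x₀ = gp g I t (k : ℤ) (gp g I t 1 x₀) := gp_add _ 1 hx₀
      rw [hadef]
      push_cast
      rw [this, ← gp_add _ 1 hx₀, add_comm, gp_add 1 _ hx₀, gp_one hb (gp_mem hx₀)]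
    have hmono : Monotone a := by
      apply monotone_nat_of_le_succ
      intro k
      rw [← hstep k]
      exact (hpos (a k) (haI k)).le
    have hbdd : BddAbove (Set.range a) := by
      refine ⟨x, ?_⟩
      rintro y ⟨k, rfl⟩
      exact le_of_not_gt (fun h => absurd (hcon k) (not_le.mpr h))
    set L := ⨆ k, a k with hLdef
    have htend : Filter.Tendsto a Filter.atTop (nhds L) := tendsto_atTop_ciSup hmono hbdd
    have hx₀L : x₀ ≤ L := by
      have := le_ciSup hbdd 0
      simpa [hadef, gp_zero] using this
    have hLx : L ≤ x := ciSup_le (fun k => le_of_not_gt (fun h => absurd (hcon k) (not_le.mpr h)))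
    have hLI : L ∈ I := hIconn.out hx₀ hx ⟨hx₀L, hLx⟩
    have htendw : Filter.Tendsto a Filter.atTop (nhdsWithin L I) :=
      tendsto_nhdsWithin_iff.mpr ⟨htend, Filter.Eventually.of_forall haI⟩
    have h1 : Filter.Tendsto (fun k => g t (a k)) Filter.atTop (nhds (g t L)) :=
      (hgc L hLI).tendsto.comp htendw
    have h2 : Filter.Tendsto (fun k => g t (a k)) Filter.atTop (nhds L) := by
      have : (fun k => g t (a k)) = fun k => a (k + 1) := funext hstep
      rw [this]
      exact htend.comp (Filter.tendsto_add_atTop_nat 1)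
    exact absurd (tendsto_nhds_unique h1 h2) (ne_of_gt (hpos L hLI))
  · by_contra hcon
    push_neg at hcon
    set a : ℕ → ℝ := fun k => gp g I t (-(k : ℤ)) x₀ with hadef
    have haI : ∀ k, a k ∈ I := fun k => gp_mem hx₀
    have hstep : ∀ k : ℕ, g t (a (k + 1)) = a k := by
      intro k
      have h1 : gp g I t (1 + -((k : ℤ) + 1)) x₀ = gp g I t 1 (gp g I t (-((k : ℤ) + 1)) x₀) :=
        gp_add 1 _ hx₀
      rw [gp_one hb (gp_mem hx₀)] at h1
      have h2 : (1 : ℤ) + -((k : ℤ) + 1) = -(k : ℤ) := by ring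
      rw [h2] at h1
      rw [hadef]
      push_cast
      rw [← h1]
    have hmono : Antitone a := by
      apply antitone_nat_of_succ_le
      intro k
      rw [← hstep k]
      exact (hpos (a (k + 1)) (haI (k + 1))).le
    have hbdd : BddBelow (Set.range a) := by
      refine ⟨x, ?_⟩
      rintro y ⟨k, rfl⟩
      exact (hcon _).le
    set L := ⨅ k, a k with hLdef
    have htend : Filter.Tendsto a Filter.atTop (nhds L) := tendsto_atTop_ciInf hmono hbdd
    have hLx₀ : L ≤ x₀ := by
      have := ciInf_le hbdd 0
      simpa [hadef, gp_zero] using this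
    have hxL : x ≤ L := le_ciInf (fun k => (hcon _).le)
    have hLI : L ∈ I := hIconn.out hx hx₀ ⟨hxL, hLx₀⟩
    have htendw : Filter.Tendsto (fun k => a (k + 1)) Filter.atTop (nhdsWithin L I) :=
      tendsto_nhdsWithin_iff.mpr ⟨htend.comp (Filter.tendsto_add_atTop_nat 1),
        Filter.Eventually.of_forall (fun k => haI _)⟩
    have h1 : Filter.Tendsto (fun k => g t (a (k + 1))) Filter.atTop (nhds (g t L)) :=
      (hgc L hLI).tendsto.comp htendw
    have h2 : Filter.Tendsto (fun k => g t (a (k + 1))) Filter.atTop (nhds L) := by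
      have : (fun k => g t (a (k + 1))) = fun k => a k := funext hstep
      rw [this]
      exact htend
    exact absurd (tendsto_nhds_unique h1 h2) (ne_of_gt (hpos L hLI))

open scoped Classical in
noncomputable def NN (g : ℝ → ℝ → ℝ) (I : Set ℝ) (x₀ t x : ℝ) : ℤ :=
  if h : ∃ n : ℤ, gp g I t n x₀ ≤ x ∧ x < gp g I t (n + 1) x₀ then h.choose else 0

noncomputable def ff (g : ℝ → ℝ → ℝ) (I : Set ℝ) (x₀ t x : ℝ) : ℝ :=
  gp g I 0 (NN g I x₀ t x)
    (x₀ + (gp g I t (-(NN g I x₀ t x)) x - x₀) * ((g 0 x₀ - x₀) / (g t x₀ - x₀)))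

noncomputable def FF (g : ℝ → ℝ → ℝ) (I : Set ℝ) (x₀ : ℝ) (n : ℤ) (t x : ℝ) : ℝ :=
  gp g I 0 n (x₀ + (gp g I t (-n) x - x₀) * ((g 0 x₀ - x₀) / (g t x₀ - x₀)))

section Key

variable {I : Set ℝ} {g : ℝ → ℝ → ℝ} {x₀ : ℝ}

lemma exN (hIconn : I.OrdConnected)
    (hgcont : ContinuousOn (fun q : ℝ × ℝ => g q.1 q.2) (Icc 0 1 ×ˢ I))
    (hghomeo : ∀ t ∈ Icc (0 : ℝ) 1, Set.BijOn (g t) I I ∧ StrictMonoOn (g t) I)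
    (hpos : ∀ t ∈ Icc (0:ℝ) 1, ∀ x ∈ I, x < g t x) (hx₀ : x₀ ∈ I)
    {t : ℝ} (ht : t ∈ Icc (0:ℝ) 1) {x : ℝ} (hx : x ∈ I) :
    ∃ n : ℤ, gp g I t n x₀ ≤ x ∧ x < gp g I t (n + 1) x₀ := by
  obtain ⟨⟨m, hm1⟩, ⟨k, hk1⟩⟩ :=
    escape hIconn (gcont_slice hgcont ht) (hghomeo t ht).1 (hpos t ht) hx₀ hx
  have ho : StrictMono (fun n : ℤ => gp g I t n x₀) :=
    gp_orbit_strictMono (hghomeo t ht).1 (hghomeo t ht).2 (hpos t ht) hx₀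
  have hbdd : ∀ z : ℤ, gp g I t z x₀ ≤ x → z ≤ m := by
    intro z hz
    exact (ho.lt_iff_lt.mp (lt_of_le_of_lt hz hm1)).le
  obtain ⟨ub, hub, hmax⟩ := Int.exists_greatest_of_bdd ⟨m, hbdd⟩ ⟨k, hk1⟩
  refine ⟨ub, hub, ?_⟩
  by_contra hc
  push_neg at hc
  exact absurd (hmax _ hc) (by omega)

lemma NN_spec (hIconn : I.OrdConnected)
    (hgcont : ContinuousOn (fun q : ℝ × ℝ => g q.1 q.2) (Icc 0 1 ×ˢ I))
    (hghomeo : ∀ t ∈ Icc (0 : ℝ) 1, Set.BijOn (g t) I I ∧ StrictMonoOn (g t) I)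
    (hpos : ∀ t ∈ Icc (0:ℝ) 1, ∀ x ∈ I, x < g t x) (hx₀ : x₀ ∈ I)
    {t : ℝ} (ht : t ∈ Icc (0:ℝ) 1) {x : ℝ} (hx : x ∈ I) :
    gp g I t (NN g I x₀ t x) x₀ ≤ x ∧ x < gp g I t (NN g I x₀ t x + 1) x₀ := by
  have h := exN hIconn hgcont hghomeo hpos hx₀ ht hx
  rw [NN, dif_pos h]
  exact h.choose_spec

lemma ff_formula (hIconn : I.OrdConnected)
    (hgcont : ContinuousOn (fun q : ℝ × ℝ => g q.1 q.2) (Icc 0 1 ×ˢ I))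
    (hghomeo : ∀ t ∈ Icc (0 : ℝ) 1, Set.BijOn (g t) I I ∧ StrictMonoOn (g t) I)
    (hpos : ∀ t ∈ Icc (0:ℝ) 1, ∀ x ∈ I, x < g t x) (hx₀ : x₀ ∈ I)
    {t : ℝ} (ht : t ∈ Icc (0:ℝ) 1) {x : ℝ} (hx : x ∈ I) {n : ℤ}
    (h1 : gp g I t n x₀ ≤ x) (h2 : x ≤ gp g I t (n + 1) x₀) :
    ff g I x₀ t x =
      gp g I 0 n (x₀ + (gp g I t (-n) x - x₀) * ((g 0 x₀ - x₀) / (g t x₀ - x₀))) := by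
  obtain ⟨hs1, hs2⟩ := NN_spec hIconn hgcont hghomeo hpos hx₀ ht hx
  set N := NN g I x₀ t x with hNdef
  have ho : StrictMono (fun n : ℤ => gp g I t n x₀) :=
    gp_orbit_strictMono (hghomeo t ht).1 (hghomeo t ht).2 (hpos t ht) hx₀
  have hnN : n ≤ N := by
    have : gp g I t n x₀ < gp g I t (N + 1) x₀ := lt_of_le_of_lt h1 hs2
    have := ho.lt_iff_lt.mp this
    omega
  have hNn : N ≤ n + 1 := by
    have : gp g I t N x₀ ≤ gp g I t (n + 1) x₀ := le_trans hs1 h2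
    exact ho.le_iff_le.mp this
  rcases eq_or_lt_of_le hnN with heq | hlt
  · rw [ff, ← hNdef, heq]
  · -- N = n + 1 and x = gp t (n+1) x₀ = gp t N x₀
    have hNeq : N = n + 1 := by omega
    have hxeq : x = gp g I t N x₀ := by
      rw [hNeq]
      exact le_antisymm (hNeq ▸ h2) (hNeq ▸ hs1)
    have ht0 : (0:ℝ) ∈ Icc (0:ℝ) 1 := ⟨le_refl 0, zero_le_one⟩
    have hne : g t x₀ - x₀ ≠ 0 := ne_of_gt (sub_pos.mpr (hpos t ht x₀ hx₀))
    -- LHS = gp 0 N x₀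
    have hL : ff g I x₀ t x = gp g I 0 N x₀ := by
      rw [ff, ← hNdef, hxeq, gp_cancel N hx₀]
      norm_num
    -- RHS: gp t (-n) x = g t x₀
    have hR1 : gp g I t (-n) x = g t x₀ := by
      rw [hxeq, hNeq, show n + 1 = n + 1 from rfl]
      have : gp g I t (n + 1) x₀ = gp g I t n (g t x₀) := by
        rw [gp_add n 1 hx₀, gp_one (hghomeo t ht).1 hx₀]
      rw [this, gp_cancel n ((hghomeo t ht).1.mapsTo hx₀)]
    have hR2 : x₀ + (gp g I t (-n) x - x₀) * ((g 0 x₀ - x₀) / (g t x₀ - x₀)) = g 0 x₀ := by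
      rw [hR1]
      field_simp
      ring
    rw [hL, hR2]
    have : gp g I 0 n (g 0 x₀) = gp g I 0 (n + 1) x₀ := by
      rw [gp_add n 1 hx₀, gp_one (hghomeo 0 ht0).1 hx₀]
    rw [this, ← hNeq]

lemma gpn1 {t : ℝ} (hb : Set.BijOn (g t) I I) (hx₀ : x₀ ∈ I) (n : ℤ) :
    gp g I t (n + 1) x₀ = gp g I t n (g t x₀) := by
  rw [gp_add n 1 hx₀, gp_one hb hx₀]

lemma gp_uncancel {t : ℝ} (n : ℤ) {x : ℝ} (hx : x ∈ I) :
    gp g I t n (gp g I t (-n) x) = x := by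
  have := gp_cancel (g := g) (I := I) (t := t) (-n) hx
  rwa [neg_neg] at this

section WithHyps

variable (hIconn : I.OrdConnected)
  (hgcont : ContinuousOn (fun q : ℝ × ℝ => g q.1 q.2) (Icc 0 1 ×ˢ I))
  (hghomeo : ∀ t ∈ Icc (0 : ℝ) 1, Set.BijOn (g t) I I ∧ StrictMonoOn (g t) I)
  (hpos : ∀ t ∈ Icc (0:ℝ) 1, ∀ x ∈ I, x < g t x) (hx₀ : x₀ ∈ I)

include hIconn hgcont hghomeo hpos hx₀

lemma ff_eq_FF {t : ℝ} (ht : t ∈ Icc (0:ℝ) 1) {x : ℝ} (hx : x ∈ I) {n : ℤ}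
    (h1 : gp g I t n x₀ ≤ x) (h2 : x ≤ gp g I t (n + 1) x₀) :
    ff g I x₀ t x = FF g I x₀ n t x :=
  ff_formula hIconn hgcont hghomeo hpos hx₀ ht hx h1 h2

omit hIconn hgcont hpos in
lemma u_bounds {t : ℝ} (ht : t ∈ Icc (0:ℝ) 1) {x : ℝ} (hx : x ∈ I) {n : ℤ}
    (h1 : gp g I t n x₀ ≤ x) (h2 : x ≤ gp g I t (n + 1) x₀) :
    x₀ ≤ gp g I t (-n) x ∧ gp g I t (-n) x ≤ g t x₀ := by
  have hb := (hghomeo t ht).1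
  have hm := (hghomeo t ht).2
  have hsm := gp_strictMonoOn hb hm (-n)
  constructor
  · have := hsm.le_iff_le (gp_mem hx₀) hx |>.mpr h1
    rwa [gp_cancel n hx₀] at this
  · have := hsm.le_iff_le hx (gp_mem hx₀) |>.mpr h2
    rwa [gpn1 hb hx₀ n, gp_cancel n (hb.mapsTo hx₀)] at this

omit hIconn hgcont hghomeo in
lemma inner_mem_Icc {t : ℝ} (ht : t ∈ Icc (0:ℝ) 1) {u : ℝ}
    (hu1 : x₀ ≤ u) (hu2 : u ≤ g t x₀) :
    x₀ + (u - x₀) * ((g 0 x₀ - x₀) / (g t x₀ - x₀)) ∈ Icc x₀ (g 0 x₀) := by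
  have h01 : (0:ℝ) ∈ Icc (0:ℝ) 1 := ⟨le_refl 0, zero_le_one⟩
  have hd : (0:ℝ) < g t x₀ - x₀ := sub_pos.mpr (hpos t ht x₀ hx₀)
  have hn : (0:ℝ) < g 0 x₀ - x₀ := sub_pos.mpr (hpos 0 h01 x₀ hx₀)
  have hr : (0:ℝ) < (g 0 x₀ - x₀) / (g t x₀ - x₀) := div_pos hn hd
  constructor
  · nlinarith
  · have h1 : (u - x₀) * ((g 0 x₀ - x₀) / (g t x₀ - x₀)) ≤
        (g t x₀ - x₀) * ((g 0 x₀ - x₀) / (g t x₀ - x₀)) := by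
      apply mul_le_mul_of_nonneg_right (by linarith) hr.le
    have h2 : (g t x₀ - x₀) * ((g 0 x₀ - x₀) / (g t x₀ - x₀)) = g 0 x₀ - x₀ := by
      field_simp
    linarith

omit hgcont in
lemma inner_mem_I {t : ℝ} (ht : t ∈ Icc (0:ℝ) 1) {u : ℝ}
    (hu1 : x₀ ≤ u) (hu2 : u ≤ g t x₀) :
    x₀ + (u - x₀) * ((g 0 x₀ - x₀) / (g t x₀ - x₀)) ∈ I := by
  have h01 : (0:ℝ) ∈ Icc (0:ℝ) 1 := ⟨le_refl 0, zero_le_one⟩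
  have := inner_mem_Icc hpos hx₀ ht hu1 hu2
  exact hIconn.out hx₀ ((hghomeo 0 h01).1.mapsTo hx₀) this

lemma ff_zero {x : ℝ} (hx : x ∈ I) : ff g I x₀ 0 x = x := by
  have h01 : (0:ℝ) ∈ Icc (0:ℝ) 1 := ⟨le_refl 0, zero_le_one⟩
  obtain ⟨h1, h2⟩ := NN_spec hIconn hgcont hghomeo hpos hx₀ h01 hx
  set n := NN g I x₀ 0 x with hNdef
  have hne : g 0 x₀ - x₀ ≠ 0 := ne_of_gt (sub_pos.mpr (hpos 0 h01 x₀ hx₀))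
  rw [ff, ← hNdef, div_self hne, mul_one]
  have : x₀ + (gp g I 0 (-n) x - x₀) = gp g I 0 (-n) x := by ring
  rw [this, gp_uncancel n hx]

lemma ff_mem {t : ℝ} (ht : t ∈ Icc (0:ℝ) 1) {x : ℝ} (hx : x ∈ I) :
    ff g I x₀ t x ∈ I := by
  obtain ⟨h1, h2⟩ := NN_spec hIconn hgcont hghomeo hpos hx₀ ht hx
  obtain ⟨hu1, hu2⟩ := u_bounds hghomeo hx₀ ht hx h1 h2.le
  rw [ff]
  exact gp_mem (inner_mem_I hIconn hghomeo hpos hx₀ ht hu1 hu2)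

lemma ff_strictMonoOn {t : ℝ} (ht : t ∈ Icc (0:ℝ) 1) :
    StrictMonoOn (ff g I x₀ t) I := by
  have h01 : (0:ℝ) ∈ Icc (0:ℝ) 1 := ⟨le_refl 0, zero_le_one⟩
  have hb := (hghomeo t ht).1
  have hm := (hghomeo t ht).2
  have hb0 := (hghomeo 0 h01).1
  have hm0 := (hghomeo 0 h01).2
  have hd : (0:ℝ) < g t x₀ - x₀ := sub_pos.mpr (hpos t ht x₀ hx₀)
  have hn0 : (0:ℝ) < g 0 x₀ - x₀ := sub_pos.mpr (hpos 0 h01 x₀ hx₀)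
  have hr : (0:ℝ) < (g 0 x₀ - x₀) / (g t x₀ - x₀) := div_pos hn0 hd
  have hrmul : (g t x₀ - x₀) * ((g 0 x₀ - x₀) / (g t x₀ - x₀)) = g 0 x₀ - x₀ := by
    field_simp
  have ho := gp_orbit_strictMono hb hm (hpos t ht) hx₀
  have ho0 := gp_orbit_strictMono hb0 hm0 (hpos 0 h01) hx₀
  intro x hx y hy hxy
  obtain ⟨hx1, hx2⟩ := NN_spec hIconn hgcont hghomeo hpos hx₀ ht hx
  obtain ⟨hy1, hy2⟩ := NN_spec hIconn hgcont hghomeo hpos hx₀ ht hy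
  set n := NN g I x₀ t x with hNdef
  set m := NN g I x₀ t y with hMdef
  obtain ⟨hu1, hu2⟩ := u_bounds hghomeo hx₀ ht hx hx1 hx2.le
  obtain ⟨hv1, hv2⟩ := u_bounds hghomeo hx₀ ht hy hy1 hy2.le
  set u := gp g I t (-n) x with hudef
  set v := gp g I t (-m) y with hvdef
  have hu2' : u < g t x₀ := by
    have := gp_strictMonoOn hb hm (-n) hx (gp_mem hx₀) hx2
    rwa [gpn1 hb hx₀ n, gp_cancel n (hb.mapsTo hx₀)] at this
  have hAxI : x₀ + (u - x₀) * ((g 0 x₀ - x₀) / (g t x₀ - x₀)) ∈ I :=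
    inner_mem_I hIconn hghomeo hpos hx₀ ht hu1 hu2
  have hAyI : x₀ + (v - x₀) * ((g 0 x₀ - x₀) / (g t x₀ - x₀)) ∈ I :=
    inner_mem_I hIconn hghomeo hpos hx₀ ht hv1 hv2
  have hffx : ff g I x₀ t x = gp g I 0 n (x₀ + (u - x₀) * ((g 0 x₀ - x₀) / (g t x₀ - x₀))) := by
    rw [ff, ← hNdef, ← hudef]
  have hffy : ff g I x₀ t y = gp g I 0 m (x₀ + (v - x₀) * ((g 0 x₀ - x₀) / (g t x₀ - x₀))) := by
    rw [ff, ← hMdef, ← hvdef]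
  have hnm : n ≤ m := by
    have h3 : gp g I t n x₀ < gp g I t (m + 1) x₀ := lt_of_le_of_lt hx1 (lt_trans hxy hy2)
    have := ho.lt_iff_lt.mp h3
    omega
  rw [hffx, hffy]
  rcases eq_or_lt_of_le hnm with heq | hlt
  · have huv : u < v := by
      rw [hudef, hvdef, ← heq]
      exact gp_strictMonoOn hb hm (-n) hx hy hxy
    rw [← heq]
    exact gp_strictMonoOn hb0 hm0 n hAxI hAyI (by nlinarith)
  · have hg0I : g 0 x₀ ∈ I := hb0.mapsTo hx₀
    have step1 : gp g I 0 n (x₀ + (u - x₀) * ((g 0 x₀ - x₀) / (g t x₀ - x₀))) <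
        gp g I 0 (n + 1) x₀ := by
      have hAlt : x₀ + (u - x₀) * ((g 0 x₀ - x₀) / (g t x₀ - x₀)) < g 0 x₀ := by nlinarith
      have := gp_strictMonoOn hb0 hm0 n hAxI hg0I hAlt
      rwa [← gpn1 hb0 hx₀ n] at this
    have step2 : gp g I 0 (n + 1) x₀ ≤ gp g I 0 m x₀ := ho0.monotone (by omega)
    have step3 : gp g I 0 m x₀ ≤
        gp g I 0 m (x₀ + (v - x₀) * ((g 0 x₀ - x₀) / (g t x₀ - x₀))) := by
      apply (gp_strictMonoOn hb0 hm0 m).monotoneOn hx₀ hAyI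
      nlinarith
    linarith

lemma ff_conj {t : ℝ} (ht : t ∈ Icc (0:ℝ) 1) {x : ℝ} (hx : x ∈ I) :
    ff g I x₀ t (g t x) = g 0 (ff g I x₀ t x) := by
  have h01 : (0:ℝ) ∈ Icc (0:ℝ) 1 := ⟨le_refl 0, zero_le_one⟩
  have hb := (hghomeo t ht).1
  have hm := (hghomeo t ht).2
  have hb0 := (hghomeo 0 h01).1
  obtain ⟨hx1, hx2⟩ := NN_spec hIconn hgcont hghomeo hpos hx₀ ht hx
  set n := NN g I x₀ t x with hNdef
  have hgxI : g t x ∈ I := hb.mapsTo hx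
  have hgpn1' : ∀ k : ℤ, gp g I t (k + 1) x₀ = g t (gp g I t k x₀) := by
    intro k
    rw [show k + 1 = 1 + k by ring, gp_add 1 k hx₀, gp_one hb (gp_mem hx₀)]
  have h1' : gp g I t (n + 1) x₀ ≤ g t x := by
    rw [hgpn1' n]
    exact hm.monotoneOn (gp_mem hx₀) hx hx1
  have h2' : g t x ≤ gp g I t (n + 1 + 1) x₀ := by
    rw [hgpn1' (n + 1)]
    exact hm.monotoneOn hx (gp_mem hx₀) hx2.le
  have hfgx := ff_eq_FF hIconn hgcont hghomeo hpos hx₀ ht hgxI h1' h2'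
  have hinner : gp g I t (-(n + 1)) (g t x) = gp g I t (-n) x := by
    rw [← gp_one hb hx, ← gp_add (-(n+1)) 1 hx, show -(n+1) + 1 = -n by ring]
  rw [hfgx, FF, hinner]
  obtain ⟨hu1, hu2⟩ := u_bounds hghomeo hx₀ ht hx hx1 hx2.le
  have hAI : x₀ + (gp g I t (-n) x - x₀) * ((g 0 x₀ - x₀) / (g t x₀ - x₀)) ∈ I :=
    inner_mem_I hIconn hghomeo hpos hx₀ ht hu1 hu2
  rw [show n + 1 = 1 + n by ring, gp_add 1 n hAI, gp_one hb0 (gp_mem hAI), ff, ← hNdef]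

lemma ff_surjOn {t : ℝ} (ht : t ∈ Icc (0:ℝ) 1) : Set.SurjOn (ff g I x₀ t) I I := by
  intro y hy
  have h01 : (0:ℝ) ∈ Icc (0:ℝ) 1 := ⟨le_refl 0, zero_le_one⟩
  have hb := (hghomeo t ht).1
  have hm := (hghomeo t ht).2
  have hb0 := (hghomeo 0 h01).1
  have hm0 := (hghomeo 0 h01).2
  have hd : (0:ℝ) < g t x₀ - x₀ := sub_pos.mpr (hpos t ht x₀ hx₀)
  have hn0 : (0:ℝ) < g 0 x₀ - x₀ := sub_pos.mpr (hpos 0 h01 x₀ hx₀)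
  obtain ⟨hw1, hw2⟩ := NN_spec hIconn hgcont hghomeo hpos hx₀ h01 hy
  set m := NN g I x₀ 0 y with hMdef
  set w := gp g I 0 (-m) y with hwdef
  obtain ⟨hwb1, hwb2⟩ := u_bounds hghomeo hx₀ h01 hy hw1 hw2.le
  have hwb2' : w < g 0 x₀ := by
    have := gp_strictMonoOn hb0 hm0 (-m) hy (gp_mem hx₀) hw2
    rwa [gpn1 hb0 hx₀ m, gp_cancel m (hb0.mapsTo hx₀)] at this
  set z := x₀ + (w - x₀) * ((g t x₀ - x₀) / (g 0 x₀ - x₀)) with hzdef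
  have hrt : (0:ℝ) < (g t x₀ - x₀) / (g 0 x₀ - x₀) := div_pos hd hn0
  have hwb1' : x₀ ≤ w := hwb1
  have hz1 : x₀ ≤ z := by
    rw [hzdef]
    nlinarith [mul_nonneg (sub_nonneg.mpr hwb1') hrt.le]
  have hz2 : z < g t x₀ := by
    have hq : (g 0 x₀ - x₀) * ((g t x₀ - x₀) / (g 0 x₀ - x₀)) = g t x₀ - x₀ := by
      field_simp
    rw [hzdef]
    nlinarith [mul_lt_mul_of_pos_right (show w - x₀ < g 0 x₀ - x₀ by linarith [hwb2']) hrt]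
  have hzI : z ∈ I := hIconn.out hx₀ (hb.mapsTo hx₀) ⟨hz1, hz2.le⟩
  set x := gp g I t m z with hxdef
  have hxI : x ∈ I := gp_mem hzI
  refine ⟨x, hxI, ?_⟩
  have hx1 : gp g I t m x₀ ≤ x := (gp_strictMonoOn hb hm m).monotoneOn hx₀ hzI hz1
  have hx2 : x ≤ gp g I t (m + 1) x₀ := by
    rw [gpn1 hb hx₀ m]
    exact ((gp_strictMonoOn hb hm m) hzI (hb.mapsTo hx₀) hz2).le
  rw [ff_eq_FF hIconn hgcont hghomeo hpos hx₀ ht hxI hx1 hx2, FF]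
  have hcz : gp g I t (-m) x = z := by rw [hxdef]; exact gp_cancel m hzI
  rw [hcz, hzdef]
  have hinner : x₀ + (x₀ + (w - x₀) * ((g t x₀ - x₀) / (g 0 x₀ - x₀)) - x₀) *
      ((g 0 x₀ - x₀) / (g t x₀ - x₀)) = w := by
    field_simp
    ring
  rw [hinner, hwdef]
  exact gp_uncancel m hy

lemma ff_bijOn {t : ℝ} (ht : t ∈ Icc (0:ℝ) 1) : Set.BijOn (ff g I x₀ t) I I :=
  ⟨fun x hx => ff_mem hIconn hgcont hghomeo hpos hx₀ ht hx,
    (ff_strictMonoOn hIconn hgcont hghomeo hpos hx₀ ht).injOn,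
    ff_surjOn hIconn hgcont hghomeo hpos hx₀ ht⟩

lemma orbit_contOn (hIopen : IsOpen I) (n : ℤ) :
    ContinuousOn (fun q : ℝ × ℝ => gp g I q.1 n x₀) (Icc 0 1 ×ˢ I) := by
  have h1 : ContinuousOn (fun q : ℝ × ℝ => ((q.1, x₀) : ℝ × ℝ)) (Icc 0 1 ×ˢ I) :=
    (continuous_fst.prodMk continuous_const).continuousOn
  exact (gp_contOn hIopen hgcont hghomeo n).comp h1 (fun q hq => ⟨hq.1, hx₀⟩)

lemma FF_contOn (hIopen : IsOpen I) (n : ℤ) :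
    ContinuousOn (fun q : ℝ × ℝ => FF g I x₀ n q.1 q.2)
      ((Icc 0 1 ×ˢ I) ∩ {q : ℝ × ℝ | gp g I q.1 n x₀ ≤ q.2 ∧ q.2 ≤ gp g I q.1 (n + 1) x₀}) := by
  have h01 : (0:ℝ) ∈ Icc (0:ℝ) 1 := ⟨le_refl 0, zero_le_one⟩
  set S := (Icc 0 1 ×ˢ I) ∩
    {q : ℝ × ℝ | gp g I q.1 n x₀ ≤ q.2 ∧ q.2 ≤ gp g I q.1 (n + 1) x₀} with hSdef
  have hSsub : S ⊆ Icc 0 1 ×ˢ I := inter_subset_left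
  have c1 : ContinuousOn (fun q : ℝ × ℝ => gp g I q.1 (-n) q.2) S :=
    (gp_contOn hIopen hgcont hghomeo (-n)).mono hSsub
  have c2 : ContinuousOn (fun q : ℝ × ℝ => g q.1 x₀) S :=
    (gcont_c hgcont hx₀).mono hSsub
  have hds : ∀ q ∈ S, g q.1 x₀ - x₀ ≠ 0 := by
    intro q hq
    exact ne_of_gt (sub_pos.mpr (hpos q.1 (hSsub hq).1 x₀ hx₀))
  have c3 : ContinuousOn (fun q : ℝ × ℝ =>
      x₀ + (gp g I q.1 (-n) q.2 - x₀) * ((g 0 x₀ - x₀) / (g q.1 x₀ - x₀))) S := by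
    apply continuousOn_const.add
    apply (c1.sub continuousOn_const).mul
    exact continuousOn_const.div (c2.sub continuousOn_const) hds
  have hmaps : ∀ q ∈ S, x₀ + (gp g I q.1 (-n) q.2 - x₀) *
      ((g 0 x₀ - x₀) / (g q.1 x₀ - x₀)) ∈ I := by
    rintro q ⟨⟨hqt, hqx⟩, hc1, hc2⟩
    obtain ⟨hu1, hu2⟩ := u_bounds hghomeo hx₀ hqt hqx hc1 hc2
    exact inner_mem_I hIconn hghomeo hpos hx₀ hqt hu1 hu2
  exact (gp_contOn_slice hIopen hgcont hghomeo h01 n).comp c3 hmaps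

lemma ff_contOn (hIopen : IsOpen I) :
    ContinuousOn (fun q : ℝ × ℝ => ff g I x₀ q.1 q.2) (Icc 0 1 ×ˢ I) := by
  rintro ⟨t₀, xx⟩ hq₀
  obtain ⟨ht₀, hxx⟩ := hq₀
  have hq₀ : ((t₀, xx) : ℝ × ℝ) ∈ Icc 0 1 ×ˢ I := ⟨ht₀, hxx⟩
  obtain ⟨h1, h2⟩ := NN_spec hIconn hgcont hghomeo hpos hx₀ ht₀ hxx
  set n := NN g I x₀ t₀ xx with hNdef
  have ho := gp_orbit_strictMono (hghomeo t₀ ht₀).1 (hghomeo t₀ ht₀).2 (hpos t₀ ht₀) hx₀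
  set A := (Icc 0 1 ×ˢ I) ∩
    {q : ℝ × ℝ | gp g I q.1 (n - 1) x₀ ≤ q.2 ∧ q.2 ≤ gp g I q.1 (n - 1 + 1) x₀} with hAdef
  set B := (Icc 0 1 ×ˢ I) ∩
    {q : ℝ × ℝ | gp g I q.1 n x₀ ≤ q.2 ∧ q.2 ≤ gp g I q.1 (n + 1) x₀} with hBdef
  have hffA : ∀ q ∈ A, ff g I x₀ q.1 q.2 = FF g I x₀ (n - 1) q.1 q.2 := by
    rintro q ⟨⟨hqt, hqx⟩, hc1, hc2⟩
    exact ff_eq_FF hIconn hgcont hghomeo hpos hx₀ hqt hqx hc1 hc2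
  have hffB : ∀ q ∈ B, ff g I x₀ q.1 q.2 = FF g I x₀ n q.1 q.2 := by
    rintro q ⟨⟨hqt, hqx⟩, hc1, hc2⟩
    exact ff_eq_FF hIconn hgcont hghomeo hpos hx₀ hqt hqx hc1 hc2
  have hq₀B : ((t₀, xx) : ℝ × ℝ) ∈ B := ⟨hq₀, h1, h2.le⟩
  have hCB : ContinuousWithinAt (fun q : ℝ × ℝ => ff g I x₀ q.1 q.2) B (t₀, xx) :=
    ((FF_contOn hIconn hgcont hghomeo hpos hx₀ hIopen n) _ hq₀B).congr hffB (hffB _ hq₀B)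
  have e2 : ∀ᶠ q in nhdsWithin ((t₀, xx) : ℝ × ℝ) (Icc 0 1 ×ˢ I),
      q.2 < gp g I q.1 (n + 1) x₀ := by
    have hcwa : ContinuousWithinAt (fun q : ℝ × ℝ => gp g I q.1 (n + 1) x₀ - q.2)
        (Icc 0 1 ×ˢ I) (t₀, xx) :=
      ((orbit_contOn hIconn hgcont hghomeo hpos hx₀ hIopen (n + 1)) _ hq₀).sub
        continuous_snd.continuousWithinAt
    have := hcwa (Ioi_mem_nhds (sub_pos.mpr h2))
    filter_upwards [this] with q hq
    simpa [sub_pos] using hq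
  rcases eq_or_lt_of_le h1 with heq | hlt
  · -- xx = gp t₀ n x₀ : use both pieces A and B
    have hq₀A : ((t₀, xx) : ℝ × ℝ) ∈ A := by
      refine ⟨hq₀, ?_, ?_⟩
      · exact le_trans (ho (show n - 1 < n by omega)).le heq.le
      · rw [show n - 1 + 1 = n by ring]
        exact le_of_eq heq.symm
    have hCA : ContinuousWithinAt (fun q : ℝ × ℝ => ff g I x₀ q.1 q.2) A (t₀, xx) :=
      ((FF_contOn hIconn hgcont hghomeo hpos hx₀ hIopen (n - 1)) _ hq₀A).congr
        hffA (hffA _ hq₀A)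
    have e0 : ∀ᶠ q in nhdsWithin ((t₀, xx) : ℝ × ℝ) (Icc 0 1 ×ˢ I),
        gp g I q.1 (n - 1) x₀ < q.2 := by
      have hcwa : ContinuousWithinAt (fun q : ℝ × ℝ => q.2 - gp g I q.1 (n - 1) x₀)
          (Icc 0 1 ×ˢ I) (t₀, xx) :=
        continuous_snd.continuousWithinAt.sub
          ((orbit_contOn hIconn hgcont hghomeo hpos hx₀ hIopen (n - 1)) _ hq₀)
      have heq' : gp g I t₀ n x₀ = xx := heq
      have hlt' : gp g I t₀ (n - 1) x₀ < xx := heq' ▸ (ho (show n - 1 < n by omega))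
      have := hcwa (Ioi_mem_nhds (sub_pos.mpr hlt'))
      filter_upwards [this] with q hq
      simpa [sub_pos] using hq
    have hev : A ∪ B ∈ nhdsWithin ((t₀, xx) : ℝ × ℝ) (Icc 0 1 ×ˢ I) := by
      have : ∀ᶠ q in nhdsWithin ((t₀, xx) : ℝ × ℝ) (Icc 0 1 ×ˢ I), q ∈ A ∪ B := by
        filter_upwards [e0, e2, self_mem_nhdsWithin] with q hq0 hq2 hqm
        rcases le_or_gt q.2 (gp g I q.1 n x₀) with hle | hgt
        · exact Or.inl ⟨hqm, hq0.le, by rw [show n - 1 + 1 = n by ring]; exact hle⟩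
        · exact Or.inr ⟨hqm, hgt.le, hq2.le⟩
      exact Filter.eventually_mem_set.mp this
    exact (hCA.union hCB).mono_of_mem_nhdsWithin hev
  · -- gp t₀ n x₀ < xx : only the B piece needed
    have e1 : ∀ᶠ q in nhdsWithin ((t₀, xx) : ℝ × ℝ) (Icc 0 1 ×ˢ I),
        gp g I q.1 n x₀ < q.2 := by
      have hcwa : ContinuousWithinAt (fun q : ℝ × ℝ => q.2 - gp g I q.1 n x₀)
          (Icc 0 1 ×ˢ I) (t₀, xx) :=
        continuous_snd.continuousWithinAt.sub
          ((orbit_contOn hIconn hgcont hghomeo hpos hx₀ hIopen n) _ hq₀)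
      have := hcwa (Ioi_mem_nhds (sub_pos.mpr hlt))
      filter_upwards [this] with q hq
      simpa [sub_pos] using hq
    have hev : B ∈ nhdsWithin ((t₀, xx) : ℝ × ℝ) (Icc 0 1 ×ˢ I) := by
      have : ∀ᶠ q in nhdsWithin ((t₀, xx) : ℝ × ℝ) (Icc 0 1 ×ˢ I), q ∈ B := by
        filter_upwards [e1, e2, self_mem_nhdsWithin] with q hq1 hq2 hqm
        exact ⟨hqm, hq1.le, hq2.le⟩
      exact Filter.eventually_mem_set.mp this
    exact hCB.mono_of_mem_nhdsWithin hev

end WithHyps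

end Key

theorem key {I : Set ℝ} (hIopen : IsOpen I) (hIconn : I.OrdConnected)
    {g : ℝ → ℝ → ℝ}
    (hgcont : ContinuousOn (fun q : ℝ × ℝ => g q.1 q.2) (Icc 0 1 ×ˢ I))
    (hghomeo : ∀ t ∈ Icc (0 : ℝ) 1, Set.BijOn (g t) I I ∧ StrictMonoOn (g t) I)
    {x₀ : ℝ} (hx₀ : x₀ ∈ I)
    (hpos : ∀ t ∈ Icc (0:ℝ) 1, ∀ x ∈ I, x < g t x) :
    ∃ f : ℝ → ℝ → ℝ,
      ContinuousOn (fun q : ℝ × ℝ => f q.1 q.2) (Icc 0 1 ×ˢ I) ∧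
      (∀ x ∈ I, f 0 x = x) ∧
      (∀ t ∈ Icc (0 : ℝ) 1, Set.BijOn (f t) I I ∧ StrictMonoOn (f t) I) ∧
      (∀ t ∈ Icc (0 : ℝ) 1, ∀ x ∈ I, f t (g t x) = g 0 (f t x)) :=
  ⟨ff g I x₀,
    ff_contOn hIconn hgcont hghomeo hpos hx₀ hIopen,
    fun _ hx => ff_zero hIconn hgcont hghomeo hpos hx₀ hx,
    fun _ ht => ⟨ff_bijOn hIconn hgcont hghomeo hpos hx₀ ht,
      ff_strictMonoOn hIconn hgcont hghomeo hpos hx₀ ht⟩,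
    fun _ ht _ hx => ff_conj hIconn hgcont hghomeo hpos hx₀ ht hx⟩

lemma dichotomy {I : Set ℝ} (hIconn : I.OrdConnected) {g : ℝ → ℝ → ℝ}
    (hgcont : ContinuousOn (fun q : ℝ × ℝ => g q.1 q.2) (Icc 0 1 ×ˢ I))
    (hgfix : ∀ t ∈ Icc (0 : ℝ) 1, ∀ x ∈ I, g t x ≠ x) :
    (∀ t ∈ Icc (0:ℝ) 1, ∀ x ∈ I, x < g t x) ∨
    (∀ t ∈ Icc (0:ℝ) 1, ∀ x ∈ I, g t x < x) := by
  rcases I.eq_empty_or_nonempty with hIe | ⟨x₀, hx₀⟩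
  · left; intro t ht x hx; rw [hIe] at hx; exact absurd hx (notMem_empty x)
  have h01 : (0:ℝ) ∈ Icc (0:ℝ) 1 := ⟨le_refl 0, zero_le_one⟩
  set J := (fun q : ℝ × ℝ => g q.1 q.2 - q.2) '' (Icc 0 1 ×ˢ I) with hJdef
  have hJconn : IsPreconnected J := by
    apply IsPreconnected.image
    · exact (isPreconnected_Icc).prod hIconn.isPreconnected
    · exact hgcont.sub continuous_snd.continuousOn
  have hJoc : J.OrdConnected := hJconn.ordConnected
  have h0J : (0:ℝ) ∉ J := by
    rintro ⟨q, hq, hq0⟩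
    exact hgfix q.1 hq.1 q.2 hq.2 (by linarith [sub_eq_zero.mp hq0])
  have hsJ : g 0 x₀ - x₀ ∈ J := ⟨(0, x₀), ⟨h01, hx₀⟩, rfl⟩
  have hs0 : g 0 x₀ - x₀ ≠ 0 := fun h => h0J (h ▸ hsJ)
  rcases lt_or_gt_of_ne hs0 with hneg | hpos
  · right
    intro t ht x hx
    by_contra hc
    push_neg at hc
    have hne : g t x - x ≠ 0 := fun h => h0J (h ▸ ⟨(t, x), ⟨ht, hx⟩, rfl⟩)
    have hgt : 0 < g t x - x := lt_of_le_of_ne (by linarith) (Ne.symm hne)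
    have : (0:ℝ) ∈ J := hJoc.out hsJ ⟨(t, x), ⟨ht, hx⟩, rfl⟩ ⟨hneg.le, hgt.le⟩
    exact h0J this
  · left
    intro t ht x hx
    by_contra hc
    push_neg at hc
    have hne : g t x - x ≠ 0 := fun h => h0J (h ▸ ⟨(t, x), ⟨ht, hx⟩, rfl⟩)
    have hlt : g t x - x < 0 := lt_of_le_of_ne (by linarith) hne
    have : (0:ℝ) ∈ J := hJoc.out ⟨(t, x), ⟨ht, hx⟩, rfl⟩ hsJ ⟨hlt.le, hpos.le⟩
    exact h0J this

/-- given a continuous family `(g_t)_{t ∈ [0,1]}` of orientation-preserving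
homeomorphisms of an open interval `I ⊆ ℝ` with no fixed points in `I`, there is a
continuous family `(f_t)_{t ∈ [0,1]}` of homeomorphisms of `I` with `f_0 = id` and
`f_t ∘ g_t ∘ f_t⁻¹ = g_0`, i.e. `f_t ∘ g_t = g_0 ∘ f_t` on `I`. -/
theorem conjugating_family_exists (I : Set ℝ) (hIopen : IsOpen I) (hIconn : I.OrdConnected)
    (hIne : I.Nonempty) (g : ℝ → ℝ → ℝ)
    (hgcont : ContinuousOn (fun q : ℝ × ℝ => g q.1 q.2) (Icc 0 1 ×ˢ I))
    (hghomeo : ∀ t ∈ Icc (0 : ℝ) 1, BijOn (g t) I I ∧ StrictMonoOn (g t) I)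
    (hgfix : ∀ t ∈ Icc (0 : ℝ) 1, ∀ x ∈ I, g t x ≠ x) :
    ∃ f : ℝ → ℝ → ℝ,
      ContinuousOn (fun q : ℝ × ℝ => f q.1 q.2) (Icc 0 1 ×ˢ I) ∧
      (∀ x ∈ I, f 0 x = x) ∧
      (∀ t ∈ Icc (0 : ℝ) 1, BijOn (f t) I I ∧ StrictMonoOn (f t) I) ∧
      (∀ t ∈ Icc (0 : ℝ) 1, ∀ x ∈ I, f t (g t x) = g 0 (f t x)) := by
  obtain ⟨x₀, hx₀⟩ := hIne
  rcases dichotomy hIconn hgcont hgfix with hpos | hneg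
  · exact key hIopen hIconn hgcont hghomeo hx₀ hpos
  · set I' : Set ℝ := (fun x : ℝ => -x) ⁻¹' I with hI'def
    set g' : ℝ → ℝ → ℝ := fun t x => - g t (-x) with hg'def
    have hmem : ∀ x : ℝ, x ∈ I' ↔ -x ∈ I := fun x => Iff.rfl
    have hmem' : ∀ x : ℝ, x ∈ I → -x ∈ I' := fun x hx => by
      rw [hmem, neg_neg]; exact hx
    have hI'open : IsOpen I' := hIopen.preimage continuous_neg
    have hI'conn : I'.OrdConnected := by
      constructor
      intro a ha b hb c hc
      exact (hmem c).mpr (hIconn.out hb ha ⟨neg_le_neg hc.2, neg_le_neg hc.1⟩)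
    have hg'cont : ContinuousOn (fun q : ℝ × ℝ => g' q.1 q.2) (Icc 0 1 ×ˢ I') := by
      have hc : ContinuousOn (fun q : ℝ × ℝ => ((q.1, -q.2) : ℝ × ℝ)) (Icc 0 1 ×ˢ I') :=
        (continuous_fst.prodMk continuous_snd.neg).continuousOn
      exact (hgcont.comp hc (fun q hq => ⟨hq.1, hq.2⟩)).neg
    have hg'homeo : ∀ t ∈ Icc (0:ℝ) 1, BijOn (g' t) I' I' ∧ StrictMonoOn (g' t) I' := by
      intro t ht
      obtain ⟨hb, hm⟩ := hghomeo t ht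
      constructor
      · refine ⟨fun x hx => ?_, fun x hx y hy hxy => ?_, fun y hy => ?_⟩
        · rw [hmem, hg'def, neg_neg]
          exact hb.mapsTo hx
        · have h1 : g t (-x) = g t (-y) := by
            have : - g t (-x) = - g t (-y) := hxy
            linarith
          have h2 : -x = -y := hb.injOn hx hy h1
          linarith
        · obtain ⟨z, hz, hgz⟩ := hb.surjOn hy
          refine ⟨-z, hmem' z hz, ?_⟩
          show - g t (-(-z)) = y
          rw [neg_neg, hgz]
          exact neg_neg y
      · intro x hx y hy hxy
        show - g t (-x) < - g t (-y)
        have := hm hy hx (neg_lt_neg hxy)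
        linarith
    have hpos' : ∀ t ∈ Icc (0:ℝ) 1, ∀ x ∈ I', x < g' t x := by
      intro t ht x hx
      have := hneg t ht (-x) hx
      show x < - g t (-x)
      linarith
    obtain ⟨f', hf'c, hf'0, hf'h, hf'conj⟩ :=
      key hI'open hI'conn hg'cont hg'homeo (hmem' x₀ hx₀) hpos'
    refine ⟨fun t x => - f' t (-x), ?_, ?_, ?_, ?_⟩
    · have hc : ContinuousOn (fun q : ℝ × ℝ => ((q.1, -q.2) : ℝ × ℝ)) (Icc 0 1 ×ˢ I) :=
        (continuous_fst.prodMk continuous_snd.neg).continuousOn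
      exact (hf'c.comp hc (fun q hq => ⟨hq.1, hmem' q.2 hq.2⟩)).neg
    · intro x hx
      show - f' 0 (-x) = x
      rw [hf'0 (-x) (hmem' x hx), neg_neg]
    · intro t ht
      obtain ⟨⟨hb'm, hb'i, hb's⟩, hm'⟩ := hf'h t ht
      refine ⟨⟨fun x hx => ?_, fun x hx y hy hxy => ?_, fun y hy => ?_⟩, ?_⟩
      · have : f' t (-x) ∈ I' := hb'm (hmem' x hx)
        rw [hmem] at this
        exact this
      · have h1 : f' t (-x) = f' t (-y) := by
          have : - f' t (-x) = - f' t (-y) := hxy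
          linarith
        have h2 : -x = -y := hb'i (hmem' x hx) (hmem' y hy) h1
        linarith
      · obtain ⟨z, hz, hgz⟩ := hb's (hmem' y hy)
        refine ⟨-z, (hmem z).mp hz, ?_⟩
        show - f' t (-(-z)) = y
        rw [neg_neg, hgz]
        exact neg_neg y
      · intro x hx y hy hxy
        show - f' t (-x) < - f' t (-y)
        have := hm' (hmem' y hy) (hmem' x hx) (neg_lt_neg hxy)
        linarith
    · intro t ht x hx
      have h1 : -(g t x) = g' t (-x) := by
        rw [hg'def]
        show -(g t x) = - g t (-(-x))
        rw [neg_neg]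
      show - f' t (-(g t x)) = g 0 (- f' t (-x))
      rw [h1, hf'conj t ht (-x) (hmem' x hx)]
      show - (- g 0 (- f' t (-x))) = _
      rw [neg_neg]
end gp
end
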